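/- Fix an odd integer d_v ≥ 5 and an integer d_c > d_v, and set m = (d_v − 1)/2. There exist δ ∈ (0, 1/2] and constants 0 < c₁ ≤ c₂, all depending only on d_v and d_c, such that for every p₀ ∈ (0, δ], the sequence defined by q_0 = p₀ and q_{i+1} = f_B(q_i) (where f_B is the Gallager-B density-evolution map with parameters (p₀, d_v, d_c)) satisfies, for every i ≥ 0: c₁^{(m^i − 1)/(m − 1)} · p₀^{m^i} ≤ q_i ≤ c₂^{(m^i − 1)/(m − 1)} · p₀^{m^i}. -/

import Mathlib

open Finset

/-- The Gallager-B density-evolution map with channel flip probability `p₀` and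
degrees `(d_v, d_c)`, for odd `d_v`. -/
noncomputable def gallagerB (p₀ : ℝ) (d_v d_c : ℕ) (p : ℝ) : ℝ :=
  p₀ - (p₀ / 2 ^ (d_v - 1)) *
        ∑ j ∈ Finset.Icc ((d_v - 1) / 2) (d_v - 1),
          (Nat.choose (d_v - 1) j : ℝ) * (1 + (1 - 2 * p) ^ (d_c - 1)) ^ j *
            (1 - (1 - 2 * p) ^ (d_c - 1)) ^ (d_v - 1 - j)
     + ((1 - p₀) / 2 ^ (d_v - 1)) *
        ∑ j ∈ Finset.Icc ((d_v - 1) / 2) (d_v - 1),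
          (Nat.choose (d_v - 1) j : ℝ) * (1 - (1 - 2 * p) ^ (d_c - 1)) ^ j *
            (1 + (1 - 2 * p) ^ (d_c - 1)) ^ (d_v - 1 - j)

/-!
Write `d_v = 2m + 1` and `x = (1 - 2p)^(d_c - 1)`. Splitting the binomial expansion of
`((1 + x) + (1 - x))^(2m) = 4^m` at the middle exhibits `f_B(p)` as `(p₀ L + (1 - p₀) U) / 4^m`,
where `L` and `U` are half-sums every term of which carries `1 - x` to a power at least `m`;
as `1 - x ≤ 1 + x`, each term is at most its binomial coefficient times `((1 + x)(1 - x))^m`,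
and `U` contains the central term `C(2m, m) ((1 + x)(1 - x))^m`. Bernoulli's inequality puts
`(1 + x)(1 - x)` between `2p` and `4 d_c p`, so `c₁ p^m ≤ f_B(p) ≤ c₂ p^m` for small `p`. On
`[0, 1/c₂]` this forces `f_B(p) ≤ p`, so the orbit stays there, and iterating the two-sided bound
produces the exponents `1 + m + ⋯ + m^(i-1) = (m^i - 1)/(m - 1)`.
-/

noncomputable def upperHalfSum (m : ℕ) (s t : ℝ) : ℝ :=
  ∑ j ∈ Icc m (2 * m), ((2 * m).choose j : ℝ) * s ^ j * t ^ (2 * m - j)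

noncomputable def lowerHalfSum (m : ℕ) (s t : ℝ) : ℝ :=
  ∑ j ∈ range m, ((2 * m).choose j : ℝ) * s ^ j * t ^ (2 * m - j)

lemma lowerHalfSum_add_upperHalfSum (m : ℕ) (s t : ℝ) :
    lowerHalfSum m s t + upperHalfSum m s t = (s + t) ^ (2 * m) := by
  rw [add_pow, range_eq_Ico, ← sum_Ico_consecutive _ (Nat.zero_le m) (by omega : m ≤ 2 * m + 1),
    lowerHalfSum, upperHalfSum, range_eq_Ico, Ico_add_one_right_eq_Icc]
  congr 1 <;> exact sum_congr rfl fun _ _ ↦ by ring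

lemma choose_mul_mul_pow_le_upperHalfSum (m : ℕ) {s t : ℝ} (hs : 0 ≤ s) (ht : 0 ≤ t) :
    ((2 * m).choose m : ℝ) * (s * t) ^ m ≤ upperHalfSum m t s := by
  have hmem : m ∈ Icc m (2 * m) := by simp only [mem_Icc]; omega
  have hterm := single_le_sum (f := fun j ↦ ((2 * m).choose j : ℝ) * t ^ j * s ^ (2 * m - j))
    (fun _ _ ↦ by positivity) hmem
  rw [show 2 * m - m = m by omega] at hterm
  calc ((2 * m).choose m : ℝ) * (s * t) ^ m = (2 * m).choose m * t ^ m * s ^ m := by ring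
    _ ≤ upperHalfSum m t s := hterm

lemma pow_mul_pow_le_mul_pow {s t : ℝ} (ht : 0 ≤ t) (hts : t ≤ s) {m j k : ℕ}
    (hjk : j + k = 2 * m) (hk : m ≤ k) : s ^ j * t ^ k ≤ (s * t) ^ m := by
  obtain ⟨r, rfl⟩ : ∃ r, k = r + m := ⟨k - m, by omega⟩
  have hjr : j + r = m := by omega
  have hs : 0 ≤ s := ht.trans hts
  calc s ^ j * t ^ (r + m) = s ^ j * t ^ r * t ^ m := by ring
    _ ≤ s ^ j * s ^ r * t ^ m := by gcongr
    _ = (s * t) ^ m := by rw [← pow_add, hjr, mul_pow]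

lemma lowerHalfSum_le {s t : ℝ} (ht : 0 ≤ t) (hts : t ≤ s) (m : ℕ) :
    lowerHalfSum m s t ≤ lowerHalfSum m 1 1 * (s * t) ^ m := by
  simp only [lowerHalfSum, one_pow, mul_one, sum_mul, mul_assoc]
  refine sum_le_sum fun j hj ↦ ?_
  have hjm : j < m := mem_range.mp hj
  gcongr
  exact pow_mul_pow_le_mul_pow ht hts (by omega) (by omega)

lemma upperHalfSum_le {s t : ℝ} (ht : 0 ≤ t) (hts : t ≤ s) (m : ℕ) :
    upperHalfSum m t s ≤ upperHalfSum m 1 1 * (s * t) ^ m := by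
  simp only [upperHalfSum, one_pow, mul_one, sum_mul, mul_assoc]
  refine sum_le_sum fun j hj ↦ ?_
  have hjm := mem_Icc.mp hj
  gcongr
  rw [mul_comm]
  exact pow_mul_pow_le_mul_pow ht hts (by omega) hjm.1

lemma gallagerB_eq (p₀ p x : ℝ) (m d_c : ℕ) (hx : (1 - 2 * p) ^ (d_c - 1) = x) :
    gallagerB p₀ (2 * m + 1) d_c p =
      (p₀ * lowerHalfSum m (1 + x) (1 - x) + (1 - p₀) * upperHalfSum m (1 - x) (1 + x)) /
        2 ^ (2 * m) := by
  have hsplit := lowerHalfSum_add_upperHalfSum m (1 + x) (1 - x)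
  rw [show 1 + x + (1 - x) = (2 : ℝ) by ring, ← eq_sub_iff_add_eq'] at hsplit
  simp only [gallagerB, hx, Nat.add_sub_cancel, Nat.mul_div_cancel_left m two_pos]
  rw [← upperHalfSum, ← upperHalfSum, hsplit]
  field_simp
  ring

lemma gallagerB_bounds_one_add_mul_one_sub {p₀ p x : ℝ} {m d_c : ℕ}
    (hp₀ : p₀ ∈ Set.Icc (0 : ℝ) (1 / 2)) (hx : (1 - 2 * p) ^ (d_c - 1) = x) (hx0 : 0 ≤ x)
    (hx1 : x ≤ 1) :
    (2 * m).choose m / 2 ^ (2 * m + 1) * ((1 + x) * (1 - x)) ^ m ≤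
        gallagerB p₀ (2 * m + 1) d_c p ∧
      gallagerB p₀ (2 * m + 1) d_c p ≤ ((1 + x) * (1 - x)) ^ m := by
  obtain ⟨hp₀0, hp₀1⟩ := hp₀
  have hs : 0 ≤ 1 + x := by linarith
  have ht : 0 ≤ 1 - x := by linarith
  have hts : 1 - x ≤ 1 + x := by linarith
  rw [gallagerB_eq p₀ p x m d_c hx]
  set L := lowerHalfSum m (1 + x) (1 - x)
  set U := upperHalfSum m (1 - x) (1 + x)
  set P := ((1 + x) * (1 - x)) ^ m
  have hL0 : 0 ≤ L := sum_nonneg fun _ _ ↦ by positivity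
  have hU0 : 0 ≤ U := sum_nonneg fun _ _ ↦ by positivity
  have hLU : L + U ≤ 2 ^ (2 * m) * P := by
    have hhalves := lowerHalfSum_add_upperHalfSum m 1 1
    rw [one_add_one_eq_two] at hhalves
    calc L + U ≤ lowerHalfSum m 1 1 * P + upperHalfSum m 1 1 * P :=
          add_le_add (lowerHalfSum_le ht hts m) (upperHalfSum_le ht hts m)
      _ = 2 ^ (2 * m) * P := by rw [← add_mul, hhalves]
  have hmid : (2 * m).choose m * P ≤ U := choose_mul_mul_pow_le_upperHalfSum m hs ht
  constructor
  · rw [pow_succ, div_mul_eq_mul_div, mul_comm (2 ^ (2 * m) : ℝ), ← div_div]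
    gcongr
    rw [div_le_iff₀ two_pos]
    nlinarith [mul_nonneg hp₀0 hL0]
  · rw [div_le_iff₀ (by positivity)]
    calc p₀ * L + (1 - p₀) * U ≤ L + U :=
          add_le_add (mul_le_of_le_one_left hL0 (by linarith))
            (mul_le_of_le_one_left hU0 (by linarith))
      _ ≤ 2 ^ (2 * m) * P := hLU
      _ = P * 2 ^ (2 * m) := mul_comm _ _

lemma gallagerB_bounds_pow {p₀ p : ℝ} (m : ℕ) {d_c : ℕ} (hd_c : 2 ≤ d_c)
    (hp₀ : p₀ ∈ Set.Icc (0 : ℝ) (1 / 2)) (hp : p ∈ Set.Icc (0 : ℝ) (1 / 2)) :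
    (2 * m).choose m / 2 ^ (m + 1) * p ^ m ≤ gallagerB p₀ (2 * m + 1) d_c p ∧
      gallagerB p₀ (2 * m + 1) d_c p ≤ (4 * d_c) ^ m * p ^ m := by
  obtain ⟨hp0, hp1⟩ := hp
  set x := (1 - 2 * p) ^ (d_c - 1) with hx
  have h2p : 0 ≤ 1 - 2 * p := by linarith
  have hx0 : 0 ≤ x := pow_nonneg h2p _
  have hx1 : x ≤ 1 - 2 * p := pow_le_of_le_one h2p (by linarith) (by omega)
  have hbernoulli : 1 - 2 * d_c * p ≤ x := by
    have h := one_add_mul_le_pow (by linarith : (-2 : ℝ) ≤ -(2 * p)) (d_c - 1)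
    have hn : ((d_c - 1 : ℕ) : ℝ) ≤ d_c := by exact_mod_cast Nat.sub_le d_c 1
    rw [← sub_eq_add_neg] at h
    nlinarith
  obtain ⟨hlow, hupp⟩ :=
    gallagerB_bounds_one_add_mul_one_sub (m := m) hp₀ hx.symm hx0 (by linarith)
  have hprod0 : 2 * p ≤ (1 + x) * (1 - x) := by nlinarith
  have hprod1 : (1 + x) * (1 - x) ≤ 4 * d_c * p := by nlinarith
  constructor
  · calc (2 * m).choose m / 2 ^ (m + 1) * p ^ m
          = (2 * m).choose m / 2 ^ (2 * m + 1) * (2 * p) ^ m := by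
            rw [mul_pow]
            field_simp
            ring
      _ ≤ (2 * m).choose m / 2 ^ (2 * m + 1) * ((1 + x) * (1 - x)) ^ m := by gcongr
      _ ≤ gallagerB p₀ (2 * m + 1) d_c p := hlow
  · calc gallagerB p₀ (2 * m + 1) d_c p ≤ ((1 + x) * (1 - x)) ^ m := hupp
      _ ≤ (4 * d_c * p) ^ m := by gcongr; linarith
      _ = (4 * d_c) ^ m * p ^ m := mul_pow _ _ _

lemma pow_geomSum_bounds_of_step {m : ℕ} (hm : 2 ≤ m) {c₁ c₂ : ℝ} (hc₁ : 0 ≤ c₁) (hc₂ : 0 ≤ c₂)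
    {q : ℕ → ℝ} (hq : ∀ i, 0 ≤ q i)
    (hstep : ∀ i, c₁ * q i ^ m ≤ q (i + 1) ∧ q (i + 1) ≤ c₂ * q i ^ m) (i : ℕ) :
    c₁ ^ ((m ^ i - 1) / (m - 1)) * q 0 ^ (m ^ i) ≤ q i ∧
      q i ≤ c₂ ^ ((m ^ i - 1) / (m - 1)) * q 0 ^ (m ^ i) := by
  have hsucc (c : ℝ) (i : ℕ) : c ^ (∑ k ∈ range (i + 1), m ^ k) * q 0 ^ (m ^ (i + 1)) =
      c * (c ^ (∑ k ∈ range i, m ^ k) * q 0 ^ (m ^ i)) ^ m := by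
    rw [geom_sum_succ, pow_succ m i, pow_succ, pow_mul, pow_mul, mul_pow]
    ring
  rw [← Nat.geomSum_eq hm]
  induction i with
  | zero => simp
  | succ i ih =>
    have hlow0 := mul_nonneg (pow_nonneg hc₁ (∑ k ∈ range i, m ^ k)) (pow_nonneg (hq 0) (m ^ i))
    rw [hsucc, hsucc]
    exact ⟨(mul_le_mul_of_nonneg_left (pow_le_pow_left₀ hlow0 ih.1 m) hc₁).trans (hstep i).1,
      (hstep i).2.trans (mul_le_mul_of_nonneg_left (pow_le_pow_left₀ (hq i) ih.2 m) hc₂)⟩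

lemma mul_pow_le_self {c δ p : ℝ} {m : ℕ} (hm : 2 ≤ m) (hc : 0 ≤ c) (hcδ : c * δ ≤ 1)
    (hp0 : 0 ≤ p) (hpδ : p ≤ δ) (hp1 : p ≤ 1) : c * p ^ m ≤ p :=
  calc c * p ^ m ≤ c * p ^ 2 :=
      mul_le_mul_of_nonneg_left (pow_le_pow_of_le_one hp0 hp1 hm) hc
    _ = c * p * p := by ring
    _ ≤ c * δ * p := by gcongr
    _ ≤ p := by nlinarith

lemma pow_geomSum_bounds_of_recurrence {g : ℝ → ℝ} {m : ℕ} (hm : 2 ≤ m) {c₁ c₂ δ : ℝ}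
    (hc₁ : 0 ≤ c₁) (hc₂ : 0 ≤ c₂) (hc₂δ : c₂ * δ ≤ 1) (hδ : δ ≤ 1)
    (hg : ∀ p ∈ Set.Icc 0 δ, c₁ * p ^ m ≤ g p ∧ g p ≤ c₂ * p ^ m)
    {q : ℕ → ℝ} (hq0 : q 0 ∈ Set.Icc 0 δ) (hrec : ∀ i, q (i + 1) = g (q i)) (i : ℕ) :
    c₁ ^ ((m ^ i - 1) / (m - 1)) * q 0 ^ (m ^ i) ≤ q i ∧
      q i ≤ c₂ ^ ((m ^ i - 1) / (m - 1)) * q 0 ^ (m ^ i) := by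
  have hmaps : ∀ i, q i ∈ Set.Icc 0 δ := by
    intro i
    induction i with
    | zero => exact hq0
    | succ i ih =>
      obtain ⟨hlow, hupp⟩ := hg (q i) ih
      rw [hrec]
      exact ⟨(mul_nonneg hc₁ (pow_nonneg ih.1 m)).trans hlow,
        hupp.trans ((mul_pow_le_self hm hc₂ hc₂δ ih.1 ih.2 (ih.2.trans hδ)).trans ih.2)⟩
  refine pow_geomSum_bounds_of_step hm hc₁ hc₂ (fun i ↦ (hmaps i).1) (fun i ↦ ?_) i
  rw [hrec]
  exact hg (q i) (hmaps i)

/-- Doubly-exponential two-sided decay of the Gallager-B density-evolution sequence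
(Lemma 4). -/
theorem gallagerB_doubly_exponential_decay (d_v d_c : ℕ) (hodd : Odd d_v) (hdv : 5 ≤ d_v)
    (hlt : d_v < d_c) (m : ℕ) (hm : m = (d_v - 1) / 2) :
    ∃ δ ∈ Set.Ioc (0 : ℝ) (1 / 2), ∃ c₁ c₂ : ℝ, 0 < c₁ ∧ c₁ ≤ c₂ ∧
      ∀ p₀ ∈ Set.Ioc (0 : ℝ) δ, ∀ q : ℕ → ℝ, q 0 = p₀ →
        (∀ i : ℕ, q (i + 1) = gallagerB p₀ d_v d_c (q i)) →
        ∀ i : ℕ,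
          c₁ ^ ((m ^ i - 1) / (m - 1)) * p₀ ^ (m ^ i) ≤ q i ∧
          q i ≤ c₂ ^ ((m ^ i - 1) / (m - 1)) * p₀ ^ (m ^ i) := by
  obtain ⟨k, rfl⟩ := hodd
  obtain rfl : m = k := by omega
  have hm2 : 2 ≤ m := by omega
  set c₁ : ℝ := (2 * m).choose m / 2 ^ (m + 1)
  set c₂ : ℝ := (4 * d_c) ^ m
  have hc₁ : 0 < c₁ := div_pos (Nat.cast_pos.2 (Nat.choose_pos (by omega))) (by positivity)
  have hc₂ : 2 ≤ c₂ := by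
    have h4 : (4 : ℝ) ≤ 4 * d_c := by norm_cast; omega
    linarith [le_self_pow₀ (by linarith : (1 : ℝ) ≤ 4 * d_c) (by omega : m ≠ 0)]
  have hc₁₂ : c₁ ≤ c₂ :=
    calc c₁ ≤ (2 * m).choose m := div_le_self (Nat.cast_nonneg _) (one_le_pow₀ one_le_two)
      _ ≤ (2 : ℝ) ^ (2 * m) := by exact_mod_cast Nat.choose_le_two_pow _ _
      _ = 4 ^ m := by rw [pow_mul]; norm_num
      _ ≤ c₂ := pow_le_pow_left₀ (by norm_num) (by norm_cast; omega) m
  have hδ : c₂⁻¹ ≤ 1 / 2 := by rw [one_div]; exact inv_anti₀ two_pos hc₂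
  refine ⟨c₂⁻¹, ⟨by positivity, hδ⟩, c₁, c₂, hc₁, hc₁₂, ?_⟩
  rintro p₀ ⟨hp₀0, hp₀δ⟩ q rfl hrec
  refine pow_geomSum_bounds_of_recurrence hm2 hc₁.le (by positivity)
    (mul_inv_cancel₀ (by positivity)).le (hδ.trans (by norm_num)) (fun p hp ↦ ?_)
    ⟨hp₀0.le, hp₀δ⟩ hrec
  exact gallagerB_bounds_pow m (by omega) ⟨hp₀0.le, hp₀δ.trans hδ⟩ ⟨hp.1, hp.2.trans hδ⟩
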